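/- Let D be a contractive, transposition invariant, and jointly convex distance on two-qubit density matrices. For any Bell-diagonal density matrix ρ = ρ(c1,c2,c3) and any two-qubit density matrix ς, define ς₀ = (1/2)·(ς + (σ2⊗σ2)·ςᵀ·(σ2⊗σ2)) (the two-qubit density matrix obtained from ς by setting both local Bloch vectors to zero while keeping the correlation matrix). Then D(ρ, ς₀) ≤ D(ρ, ς). -/

import Mathlib

open Matrix Kronecker
open scoped ComplexOrder

noncomputable section

/-- 2×2 complex matrices (single-qubit operators). -/
abbrev Mat2 := Matrix (Fin 2) (Fin 2) ℂ

/-- 4×4 complex matrices (two-qubit operators), indexed by `Fin 2 × Fin 2`. -/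
abbrev Mat4 := Matrix (Fin 2 × Fin 2) (Fin 2 × Fin 2) ℂ

/-- Pauli matrix σ₁ (x). -/
def σ1 : Mat2 := !![0, 1; 1, 0]

/-- Pauli matrix σ₂ (y). -/
def σ2 : Mat2 := !![0, -Complex.I; Complex.I, 0]

/-- Pauli matrix σ₃ (z). -/
def σ3 : Mat2 := !![1, 0; 0, -1]

/-- The Bell-diagonal state ρ(c1,c2,c3) = (1/4)(I₄ + c1 σ₁⊗σ₁ + c2 σ₂⊗σ₂ + c3 σ₃⊗σ₃). -/
def BD (c1 c2 c3 : ℝ) : Mat4 :=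
  (1 / 4 : ℂ) • ((1 : Mat4) + (c1 : ℂ) • (σ1 ⊗ₖ σ1) + (c2 : ℂ) • (σ2 ⊗ₖ σ2)
    + (c3 : ℂ) • (σ3 ⊗ₖ σ3))

/-- A two-qubit density matrix: positive semidefinite with unit trace. -/
def IsDensityMatrix (ρ : Mat4) : Prop := ρ.PosSemidef ∧ ρ.trace = 1

/-- A CPTP map given by finitely many Kraus operators. -/
def IsCPTP (Λ : Mat4 → Mat4) : Prop :=
  ∃ (n : ℕ) (K : Fin n → Mat4),
    (∑ i, (K i)ᴴ * K i) = 1 ∧ ∀ X, Λ X = ∑ i, K i * X * (K i)ᴴ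

/-- A distance `D` is contractive if it contracts under every CPTP map. -/
def Contractive (D : Mat4 → Mat4 → ℝ) : Prop :=
  ∀ Λ : Mat4 → Mat4, IsCPTP Λ → ∀ ρ σ : Mat4,
    IsDensityMatrix ρ → IsDensityMatrix σ → D (Λ ρ) (Λ σ) ≤ D ρ σ

/-- A distance `D` is invariant under transposition. -/
def TransposeInvariant (D : Mat4 → Mat4 → ℝ) : Prop :=
  ∀ ρ σ : Mat4, IsDensityMatrix ρ → IsDensityMatrix σ → D ρᵀ σᵀ = D ρ σ

/-- A distance `D` is jointly convex. -/
def JointlyConvex (D : Mat4 → Mat4 → ℝ) : Prop :=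
  ∀ q : ℝ, 0 ≤ q → q ≤ 1 → ∀ ρ σ τ ς : Mat4,
    IsDensityMatrix ρ → IsDensityMatrix σ → IsDensityMatrix τ → IsDensityMatrix ς →
    D (q • ρ + (1 - q) • σ) (q • τ + (1 - q) • ς) ≤ q * D ρ τ + (1 - q) * D σ ς

/-- A classical-classical two-qubit state: ∑ᵢⱼ pᵢⱼ |aᵢ⟩⟨aᵢ| ⊗ |bⱼ⟩⟨bⱼ| with (pᵢⱼ) a
probability distribution and {aᵢ}, {bⱼ} orthonormal bases of ℂ². -/
def IsClassical (χ : Mat4) : Prop :=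
  ∃ (p : Fin 2 → Fin 2 → ℝ) (a b : Fin 2 → Fin 2 → ℂ),
    (∀ i j, 0 ≤ p i j) ∧ (∑ i, ∑ j, p i j = 1) ∧
    (∀ i i', ∑ k, (starRingEnd ℂ) (a i k) * a i' k = if i = i' then 1 else 0) ∧
    (∀ j j', ∑ k, (starRingEnd ℂ) (b j k) * b j' k = if j = j' then 1 else 0) ∧
    χ = ∑ i, ∑ j, (p i j : ℂ) •
      (Matrix.vecMulVec (a i) (star (a i)) ⊗ₖ Matrix.vecMulVec (b j) (star (b j)))

/-- Membership in the tetrahedron of Bell-diagonal states. -/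
def InTetra (c : ℝ × ℝ × ℝ) : Prop :=
  c ∈ convexHull ℝ
    ({((1 : ℝ), (-1 : ℝ), (1 : ℝ)), ((-1 : ℝ), (1 : ℝ), (1 : ℝ)),
      ((1 : ℝ), (1 : ℝ), (-1 : ℝ)), ((-1 : ℝ), (-1 : ℝ), (-1 : ℝ))} : Set (ℝ × ℝ × ℝ))

/-- Geometric discord: distance to the set of classical states. -/
def QD (D : Mat4 → Mat4 → ℝ) (ρ : Mat4) : ℝ :=
  sInf {x : ℝ | ∃ χ : Mat4, IsClassical χ ∧ x = D ρ χ}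

/-- The Pauli matrices, indexed. -/
def pauli : Fin 3 → Mat2 := ![σ1, σ2, σ3]

/-!
The state `ς₀` is the midpoint of `ς` and its spin flip `ς̃ = (σ₂⊗σ₂) ςᵀ (σ₂⊗σ₂)`, which
reverses both local Bloch vectors and keeps the correlation matrix. Transposition followed by
conjugation with the unitary `σ₂⊗σ₂` fixes every Bell-diagonal `ρ`, so transposition invariance
and contractivity give `D(ρ, ς̃) ≤ D(ρ, ς)`; joint convexity at the midpoint then gives
`D(ρ, ς₀) ≤ (D(ρ, ς) + D(ρ, ς̃)) / 2 ≤ D(ρ, ς)`.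
-/

theorem neg_kronecker_neg {R m n p q : Type*} [Ring R] (A : Matrix m n R) (B : Matrix p q R) :
    (-A) ⊗ₖ (-B) = A ⊗ₖ B := by
  ext; simp [kroneckerMap_apply]

theorem σ1_transpose : σ1ᵀ = σ1 := by ext i j; fin_cases i <;> fin_cases j <;> rfl
theorem σ2_transpose : σ2ᵀ = -σ2 := by ext i j; fin_cases i <;> fin_cases j <;> simp [σ2]
theorem σ3_transpose : σ3ᵀ = σ3 := by ext i j; fin_cases i <;> fin_cases j <;> rfl
theorem σ2_conjTranspose : σ2ᴴ = σ2 := by ext i j; fin_cases i <;> fin_cases j <;> simp [σ2]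

theorem σ2_mul_σ2 : σ2 * σ2 = 1 := by
  ext i j; fin_cases i <;> fin_cases j <;> simp [σ2, mul_apply, Fin.sum_univ_two, one_apply]

theorem σ2_mul_σ1_mul_σ2 : σ2 * σ1 * σ2 = -σ1 := by
  ext i j; fin_cases i <;> fin_cases j <;> simp [σ1, σ2, mul_apply, Fin.sum_univ_two]

theorem σ2_mul_σ3_mul_σ2 : σ2 * σ3 * σ2 = -σ3 := by
  ext i j; fin_cases i <;> fin_cases j <;> simp [σ3, σ2, mul_apply, Fin.sum_univ_two]

theorem σ2_kronecker_σ2_unitary : (σ2 ⊗ₖ σ2)ᴴ * (σ2 ⊗ₖ σ2) = 1 := by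
  rw [conjTranspose_kronecker, σ2_conjTranspose, ← mul_kronecker_mul, σ2_mul_σ2,
    one_kronecker_one]

def spinFlip (X : Mat4) : Mat4 := (σ2 ⊗ₖ σ2) * Xᵀ * (σ2 ⊗ₖ σ2)

theorem spinFlip_eq_conj (X : Mat4) :
    spinFlip X = (σ2 ⊗ₖ σ2) * Xᵀ * (σ2 ⊗ₖ σ2)ᴴ := by
  rw [spinFlip, conjTranspose_kronecker, σ2_conjTranspose]

theorem BD_transpose (c1 c2 c3 : ℝ) : (BD c1 c2 c3)ᵀ = BD c1 c2 c3 := by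
  simp only [BD, transpose_smul, transpose_add, transpose_one, ← kroneckerMap_transpose,
    σ1_transpose, σ2_transpose, σ3_transpose, neg_kronecker_neg]

theorem spinFlip_BD (c1 c2 c3 : ℝ) : spinFlip (BD c1 c2 c3) = BD c1 c2 c3 := by
  rw [spinFlip, BD_transpose]
  simp only [BD, mul_add, add_mul, Matrix.mul_smul, Matrix.smul_mul, mul_one,
    ← mul_kronecker_mul, σ2_mul_σ2, one_kronecker_one, σ2_mul_σ1_mul_σ2, one_mul,
    σ2_mul_σ3_mul_σ2, neg_kronecker_neg]

namespace IsDensityMatrix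

theorem transpose {ρ : Mat4} (hρ : IsDensityMatrix ρ) : IsDensityMatrix ρᵀ :=
  ⟨hρ.1.transpose, by rw [trace_transpose, hρ.2]⟩

theorem conj_unitary {ρ U : Mat4} (hρ : IsDensityMatrix ρ) (hU : Uᴴ * U = 1) :
    IsDensityMatrix (U * ρ * Uᴴ) :=
  ⟨hρ.1.mul_mul_conjTranspose_same U, by rw [trace_mul_cycle, hU, one_mul, hρ.2]⟩

theorem spinFlip {ρ : Mat4} (hρ : IsDensityMatrix ρ) : IsDensityMatrix (spinFlip ρ) := by
  rw [spinFlip_eq_conj]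
  exact hρ.transpose.conj_unitary σ2_kronecker_σ2_unitary

end IsDensityMatrix

theorem isCPTP_conj_unitary {U : Mat4} (hU : Uᴴ * U = 1) : IsCPTP fun X => U * X * Uᴴ :=
  ⟨1, fun _ => U, by simpa using hU, fun X => by simp⟩

theorem Contractive.spinFlip_le {D : Mat4 → Mat4 → ℝ} (hD : Contractive D)
    (hT : TransposeInvariant D) {ρ ς : Mat4} (hρ : IsDensityMatrix ρ) (hς : IsDensityMatrix ς) :
    D (spinFlip ρ) (spinFlip ς) ≤ D ρ ς := by
  rw [spinFlip_eq_conj, spinFlip_eq_conj, ← hT ρ ς hρ hς]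
  exact hD _ (isCPTP_conj_unitary σ2_kronecker_σ2_unitary) _ _ hρ.transpose hς.transpose

theorem JointlyConvex.le_midpoint {D : Mat4 → Mat4 → ℝ} (hJC : JointlyConvex D)
    {ρ σ τ : Mat4} (hρ : IsDensityMatrix ρ) (hσ : IsDensityMatrix σ) (hτ : IsDensityMatrix τ) :
    D ρ ((1 / 2 : ℂ) • (σ + τ)) ≤ (D ρ σ + D ρ τ) / 2 := by
  have h := hJC (1 / 2) (by norm_num) (by norm_num) ρ ρ σ τ hρ hρ hσ hτ
  have hρ_mid : (1 / 2 : ℝ) • ρ + (1 - 1 / 2 : ℝ) • ρ = ρ := by rw [← add_smul]; norm_num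
  have hστ_mid : (1 / 2 : ℝ) • σ + (1 - 1 / 2 : ℝ) • τ = (1 / 2 : ℂ) • (σ + τ) := by
    norm_num [smul_add, ← Complex.coe_smul]
  rw [hρ_mid, hστ_mid] at h
  linarith

/-- `|ψ⟩⟨ψ|` for `ψ = ∑ᵢⱼ mᵢⱼ |ij⟩ / √2`; the Bell states, at the vertices of the tetrahedron,
are given by `m = 1, σ₃, σ₁, iσ₂`. -/
def bellProj (m : Mat2) : Mat4 :=
  (1 / 2 : ℝ) • vecMulVec (fun p => m p.1 p.2) (star fun p => m p.1 p.2)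

theorem posSemidef_bellProj (m : Mat2) : (bellProj m).PosSemidef :=
  (posSemidef_vecMulVec_self_star _).smul (by norm_num)

theorem BD_vertices :
    BD 1 (-1) 1 = bellProj 1 ∧ BD (-1) 1 1 = bellProj σ3 ∧
      BD 1 1 (-1) = bellProj σ1 ∧ BD (-1) (-1) (-1) = bellProj !![0, 1; -1, 0] := by
  refine ⟨?_, ?_, ?_, ?_⟩ <;> ext ⟨i, j⟩ ⟨k, l⟩ <;>
    fin_cases i <;> fin_cases j <;> fin_cases k <;> fin_cases l <;>
    simp [BD, bellProj, σ1, σ2, σ3, kroneckerMap_apply, one_apply, vecMulVec_apply] <;> ring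

theorem BD_trace (c1 c2 c3 : ℝ) : (BD c1 c2 c3).trace = 1 := by
  simp [BD, trace_kronecker, σ1, σ2, σ3, trace_fin_two]

theorem convex_setOf_posSemidef_BD :
    Convex ℝ {c : ℝ × ℝ × ℝ | (BD c.1 c.2.1 c.2.2).PosSemidef} := by
  intro x hx y hy a b ha hb hab
  have hBD : BD (a • x + b • y).1 (a • x + b • y).2.1 (a • x + b • y).2.2
      = a • BD x.1 x.2.1 x.2.2 + b • BD y.1 y.2.1 y.2.2 := by
    obtain rfl : b = 1 - a := by linarith
    simp only [BD, Prod.fst_add, Prod.snd_add, Prod.smul_fst, Prod.smul_snd, smul_eq_mul]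
    push_cast
    module
  show (BD _ _ _).PosSemidef
  rw [hBD]
  exact (hx.smul ha).add (hy.smul hb)

theorem isDensityMatrix_BD {c1 c2 c3 : ℝ} (hc : InTetra (c1, c2, c3)) :
    IsDensityMatrix (BD c1 c2 c3) := by
  obtain ⟨h1, h2, h3, h4⟩ := BD_vertices
  have hPSD : (c1, c2, c3) ∈ {c : ℝ × ℝ × ℝ | (BD c.1 c.2.1 c.2.2).PosSemidef} := by
    refine convexHull_min ?_ convex_setOf_posSemidef_BD hc
    rintro c (rfl | rfl | rfl | rfl) <;>
      simp only [Set.mem_ofPred_eq, h1, h2, h3, h4, posSemidef_bellProj]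
  exact ⟨hPSD, BD_trace c1 c2 c3⟩

/-- erasing the local Bloch vectors of ς (via
ς₀ = (ς + (σ₂⊗σ₂)·ςᵀ·(σ₂⊗σ₂))/2) cannot increase the distance to a Bell-diagonal state. -/
theorem distance_decreases_erasing_local_Bloch_vectors
    (D : Mat4 → Mat4 → ℝ) (hD : Contractive D) (hT : TransposeInvariant D)
    (hJC : JointlyConvex D)
    (c1 c2 c3 : ℝ) (hc : InTetra (c1, c2, c3)) (ς : Mat4) (hς : IsDensityMatrix ς) :
    D (BD c1 c2 c3) ((1 / 2 : ℂ) • (ς + (σ2 ⊗ₖ σ2) * ςᵀ * (σ2 ⊗ₖ σ2)))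
      ≤ D (BD c1 c2 c3) ς := by
  have hρ := isDensityMatrix_BD hc
  have h_flip : D (BD c1 c2 c3) (spinFlip ς) ≤ D (BD c1 c2 c3) ς := by
    simpa only [spinFlip_BD] using hD.spinFlip_le hT hρ hς
  calc D (BD c1 c2 c3) ((1 / 2 : ℂ) • (ς + spinFlip ς))
      ≤ (D (BD c1 c2 c3) ς + D (BD c1 c2 c3) (spinFlip ς)) / 2 :=
        hJC.le_midpoint hρ hς hς.spinFlip
    _ ≤ D (BD c1 c2 c3) ς := by linarith
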